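/- For any symmetric positive semi-definite d×d matrix R and any full-rank d×k matrix U with k ≤ d, it holds that tr(RU(UᵀRU)†UᵀR) ≥ tr(U(UᵀU)⁻¹UᵀR), where † denotes the Moore–Penrose pseudoinverse. -/

import Mathlib

/-!
Write `S = UᵀRU` and `M = RUPUᵀR`. The Moore–Penrose inverse `P` of the symmetric PSD matrix
`S` is symmetric (by uniqueness, `Pᵀ` is one too), hence PSD as `P = PᵀSP`, so
`M = (UᵀR)ᵀ P (UᵀR)` is PSD. For the orthogonal projection `Q = U(UᵀU)⁻¹Uᵀ`, the trace
`tr(QA) = tr((UᵀU)⁻¹ UᵀAU)` only sees `UᵀAU`, and `UᵀMU = SPS = S = UᵀRU`; hence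
`tr(QR) = tr(QM) ≤ tr(M)`, the last step because `M - QM` has the trace of the PSD matrix
`(1 - Q)M(1 - Q)`.
-/

open Matrix

/-- The four Penrose conditions characterizing the Moore–Penrose pseudoinverse. -/
def IsMoorePenrose {m n : Type*} [Fintype m] [Fintype n]
    (S : Matrix m n ℝ) (P : Matrix n m ℝ) : Prop :=
  S * P * S = S ∧ P * S * P = P ∧ (S * P)ᵀ = S * P ∧ (P * S)ᵀ = P * S

namespace IsMoorePenrose

variable {m n : Type*} [Fintype m] [Fintype n] {S : Matrix m n ℝ} {P : Matrix n m ℝ}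

theorem transpose (h : IsMoorePenrose S P) : IsMoorePenrose Sᵀ Pᵀ := by
  obtain ⟨h₁, h₂, h₃, h₄⟩ := h
  refine ⟨?_, ?_, ?_, ?_⟩
  · rw [← transpose_mul, ← transpose_mul, ← Matrix.mul_assoc, h₁]
  · rw [← transpose_mul, ← transpose_mul, ← Matrix.mul_assoc, h₂]
  · rw [← transpose_mul, h₄]; exact h₄
  · rw [← transpose_mul, h₃]; exact h₃

theorem unique {P' : Matrix n m ℝ} (h : IsMoorePenrose S P) (h' : IsMoorePenrose S P') :
    P = P' := by
  obtain ⟨h₁, h₂, h₃, h₄⟩ := h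
  obtain ⟨h₁', h₂', h₃', h₄'⟩ := h'
  have left : P = P * S * P' := calc
    P = P * (S * P)ᵀ := by rw [h₃, ← Matrix.mul_assoc, h₂]
    _ = P * ((S * P' * S) * P)ᵀ := by rw [h₁']
    _ = P * (S * P)ᵀ * (S * P')ᵀ := by simp only [transpose_mul, Matrix.mul_assoc]
    _ = P * S * P' := by rw [h₃, h₃']; simp only [← Matrix.mul_assoc, h₂]
  have right : P' = P * S * P' := calc
    P' = (P' * S)ᵀ * P' := by rw [h₄', h₂']
    _ = (P' * (S * P * S))ᵀ * P' := by rw [h₁]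
    _ = (P * S)ᵀ * (P' * S)ᵀ * P' := by simp only [transpose_mul, Matrix.mul_assoc]
    _ = P * S * P' := by rw [h₄, h₄', Matrix.mul_assoc, h₂']
  exact left.trans right.symm

theorem transpose_eq_self {S P : Matrix n n ℝ} (h : IsMoorePenrose S P) (hS : Sᵀ = S) :
    Pᵀ = P :=
  (hS ▸ h.transpose).unique h

theorem posSemidef {S P : Matrix n n ℝ} (h : IsMoorePenrose S P) (hS : S.PosSemidef) :
    P.PosSemidef := by
  have hP : Pᵀ = P := h.transpose_eq_self (by simpa using hS.isHermitian.eq)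
  rw [← h.2.1]
  simpa [hP] using hS.conjTranspose_mul_mul_same P

end IsMoorePenrose

theorem Matrix.trace_mul_le_trace_of_posSemidef {n : Type*} [Fintype n] [DecidableEq n]
    {Q M : Matrix n n ℝ} (hQ : Q.IsSymm) (hQQ : IsIdempotentElem Q) (hM : M.PosSemidef) :
    (Q * M).trace ≤ M.trace := by
  have hQ' : (1 - Q)ᴴ = 1 - Q := by
    rw [conjTranspose_eq_transpose_of_trivial, transpose_sub, transpose_one, hQ.eq]
  have hcompl : M.trace - (Q * M).trace = ((1 - Q) * M * (1 - Q)).trace := by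
    rw [trace_mul_cycle, hQQ.one_sub.eq, Matrix.sub_mul, Matrix.one_mul, trace_sub]
  have hnonneg := (hM.mul_mul_conjTranspose_same (1 - Q)).trace_nonneg
  rw [hQ'] at hnonneg
  linarith

section colSpaceProj

variable {m n : Type*} [Fintype m] [Fintype n] [DecidableEq n]

/-- The orthogonal projection onto the column space of `U` when `UᵀU` is invertible, and `0`
otherwise (where the junk value `(UᵀU)⁻¹ = 0` is used). -/
noncomputable def colSpaceProj (U : Matrix m n ℝ) : Matrix m m ℝ := U * (Uᵀ * U)⁻¹ * Uᵀ

theorem isSymm_colSpaceProj (U : Matrix m n ℝ) : (colSpaceProj U).IsSymm := by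
  simp only [colSpaceProj, IsSymm, transpose_mul, transpose_transpose, transpose_nonsing_inv,
    Matrix.mul_assoc]

theorem isIdempotentElem_colSpaceProj (U : Matrix m n ℝ) : IsIdempotentElem (colSpaceProj U) := by
  have hinv : (Uᵀ * U)⁻¹ * (Uᵀ * U) * (Uᵀ * U)⁻¹ = (Uᵀ * U)⁻¹ := by
    rcases nonsing_inv_cancel_or_zero (Uᵀ * U) with ⟨h, -⟩ | h
    · rw [h, Matrix.one_mul]
    · rw [h, Matrix.zero_mul, Matrix.zero_mul]
  calc colSpaceProj U * colSpaceProj U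
      = U * ((Uᵀ * U)⁻¹ * (Uᵀ * U) * (Uᵀ * U)⁻¹) * Uᵀ := by
        simp only [colSpaceProj, Matrix.mul_assoc]
    _ = colSpaceProj U := by rw [hinv, colSpaceProj]

theorem trace_colSpaceProj_mul (U : Matrix m n ℝ) (A : Matrix m m ℝ) :
    (colSpaceProj U * A).trace = ((Uᵀ * U)⁻¹ * (Uᵀ * A * U)).trace := by
  rw [colSpaceProj, Matrix.mul_assoc, Matrix.mul_assoc, trace_mul_comm]
  simp only [Matrix.mul_assoc]

end colSpaceProj

theorem trace_pinv_lower_bound_general {d k : ℕ}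
    (R : Matrix (Fin d) (Fin d) ℝ) (hR : R.PosSemidef)
    (U : Matrix (Fin d) (Fin k) ℝ)
    (P : Matrix (Fin k) (Fin k) ℝ)
    (hP : IsMoorePenrose (Uᵀ * R * U) P) :
    (U * (Uᵀ * U)⁻¹ * Uᵀ * R).trace ≤ (R * U * P * Uᵀ * R).trace := by
  have hS : (Uᵀ * R * U).PosSemidef := by simpa using hR.conjTranspose_mul_mul_same U
  have hM : (R * U * P * Uᵀ * R).PosSemidef := by
    have hRt : Rᵀ = R := hR.isHermitian.eq
    simpa [hRt, Matrix.mul_assoc] using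
      (hP.posSemidef hS).conjTranspose_mul_mul_same (Uᵀ * R)
  have hcompress : Uᵀ * (R * U * P * Uᵀ * R) * U = Uᵀ * R * U := calc
    _ = Uᵀ * R * U * P * (Uᵀ * R * U) := by simp only [Matrix.mul_assoc]
    _ = Uᵀ * R * U := hP.1
  calc (U * (Uᵀ * U)⁻¹ * Uᵀ * R).trace = (colSpaceProj U * R).trace := rfl
    _ = (colSpaceProj U * (R * U * P * Uᵀ * R)).trace := by
      rw [trace_colSpaceProj_mul, trace_colSpaceProj_mul, hcompress]
    _ ≤ (R * U * P * Uᵀ * R).trace :=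
      trace_mul_le_trace_of_posSemidef (isSymm_colSpaceProj U) (isIdempotentElem_colSpaceProj U) hM

/-- **Lemma 3.3**: for a symmetric PSD matrix `R` and a full rank `d × k` matrix `U`
with `k ≤ d`, `tr(RU(UᵀRU)†UᵀR) ≥ tr(U(UᵀU)⁻¹UᵀR)`. -/
theorem trace_pinv_lower_bound {d k : ℕ} (hk : k ≤ d)
    (R : Matrix (Fin d) (Fin d) ℝ) (hR : R.PosSemidef)
    (U : Matrix (Fin d) (Fin k) ℝ) (hU : U.rank = k)
    (P : Matrix (Fin k) (Fin k) ℝ)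
    (hP : IsMoorePenrose (Uᵀ * R * U) P) :
    (U * (Uᵀ * U)⁻¹ * Uᵀ * R).trace ≤ (R * U * P * Uᵀ * R).trace :=
  trace_pinv_lower_bound_general R hR U P hP
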